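/- Let 𝔪 be the real Lie subalgebra of d×d complex matrices generated by 𝔥 ∪ 𝔥'. Then for all 0 ≤ j < k ≤ d−1, both σ_x^{(jk)} = i(E_{jk} + E_{kj}) and σ_y^{(jk)} = E_{jk} − E_{kj} belong to 𝔪. -/

import Mathlib

/-!
Conjugating `diag(i·d, 0, …, 0) ∈ 𝔥` by the Fourier matrix gives the matrix all of whose entries
are `i`: the zeroth column of `V` is constant and its other columns sum to zero, while `V` is an
invertible Vandermonde matrix in the distinct `d`-th roots of unity. Bracketing with
`diag f ∈ 𝔥` multiplies the entry `(p, q)` by `f p - f q`, so bracketing this matrix with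
`diag(i eₖ)` and then with `diag(i eⱼ)` kills every entry except `(j, k)` and `(k, j)` and leaves
`σ_x^{(jk)}`; one more bracket with `diag(i eⱼ)` gives `-σ_y^{(jk)}`.
-/

open scoped Matrix

attribute [local instance 100] LieRing.ofAssociativeRing

/-- The d×d Fourier matrix V with entries V_{jk} = ω^{jk}/√d, ω = exp(2πi/d). -/
noncomputable def fourierV (d : ℕ) : Matrix (Fin d) (Fin d) ℂ :=
  Matrix.of fun j k =>
    Complex.exp (2 * Real.pi * Complex.I / d) ^ ((j : ℕ) * (k : ℕ)) / (Real.sqrt d : ℂ)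

/-- σ_x^{(jk)} = i(E_{jk} + E_{kj}). -/
noncomputable def sigmaX {d : ℕ} (j k : Fin d) : Matrix (Fin d) (Fin d) ℂ :=
  Complex.I • (Matrix.single j k 1 + Matrix.single k j 1)

/-- σ_y^{(jk)} = E_{jk} − E_{kj}. -/
def sigmaY {d : ℕ} (j k : Fin d) : Matrix (Fin d) (Fin d) ℂ :=
  Matrix.single j k 1 - Matrix.single k j 1

/-- 𝔥: the diagonal matrices diag(iα₀,…,iα_{d−1}) with real αⱼ. -/
def diagLie (d : ℕ) : Set (Matrix (Fin d) (Fin d) ℂ) :=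
  {A | ∃ α : Fin d → ℝ, A = Matrix.diagonal fun j => Complex.I * (α j : ℂ)}

/-- 𝔥' = V 𝔥 V⁻¹. -/
noncomputable def diagLieConj (d : ℕ) : Set (Matrix (Fin d) (Fin d) ℂ) :=
  {A | ∃ B ∈ diagLie d, A = fourierV d * B * (fourierV d)⁻¹}

open Matrix Complex

section DiagonalBracket

variable {n R : Type*} [Fintype n] [DecidableEq n] [CommRing R]

theorem lie_diagonal_apply (f : n → R) (M : Matrix n n R) (p q : n) :
    ⁅diagonal f, M⁆ p q = (f p - f q) * M p q := by
  rw [Ring.lie_def, Matrix.sub_apply, diagonal_mul, mul_diagonal]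
  ring

theorem lie_diagonal_single_lie_diagonal_single {j k : n} (hjk : j ≠ k) (c : R)
    (M : Matrix n n R) :
    ⁅diagonal (Pi.single j c), ⁅diagonal (Pi.single k c), M⁆⁆ =
      -c ^ 2 • (single j k (M j k) + single k j (M k j)) := by
  ext p q
  simp only [lie_diagonal_apply, Matrix.smul_apply, Matrix.add_apply, Matrix.single_apply,
    Pi.single_apply, smul_eq_mul]
  by_cases hpj : p = j <;> by_cases hqj : q = j <;> by_cases hpk : p = k <;>
    by_cases hqk : q = k <;> subst_vars <;> simp_all [eq_comm] <;> ring

theorem lie_diagonal_single_single_add_single {j k : n} (hjk : j ≠ k) (c a b : R) :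
    ⁅diagonal (Pi.single j c), single j k a + single k j b⁆ =
      c • (single j k a - single k j b) := by
  ext p q
  simp only [lie_diagonal_apply, Matrix.smul_apply, Matrix.add_apply, Matrix.sub_apply,
    Matrix.single_apply, Pi.single_apply, smul_eq_mul]
  by_cases hpj : p = j <;> by_cases hqj : q = j <;> by_cases hpk : p = k <;>
    by_cases hqk : q = k <;> subst_vars <;> simp_all [eq_comm]

end DiagonalBracket

theorem geom_sum_eq_zero_of_pow_eq_one {K : Type*} [Field K] {x : K} {n : ℕ}
    (hxn : x ^ n = 1) (hx : x ≠ 1) : ∑ i ∈ Finset.range n, x ^ i = 0 := by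
  rw [geom_sum_eq hx, hxn, sub_self, zero_div]

theorem ofReal_sqrt_natCast_mul_self (d : ℕ) : (Real.sqrt d : ℂ) * Real.sqrt d = d := by
  rw [← ofReal_mul, Real.mul_self_sqrt d.cast_nonneg, ofReal_natCast]

theorem ofReal_sqrt_natCast_ne_zero (d : ℕ) [NeZero d] : (Real.sqrt d : ℂ) ≠ 0 :=
  ofReal_ne_zero.2 (Real.sqrt_ne_zero'.2 (Nat.cast_pos.2 (NeZero.pos d)))

theorem fourierV_eq_smul_vandermonde (d : ℕ) :
    fourierV d = (Real.sqrt d : ℂ)⁻¹ •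
      vandermonde fun p : Fin d => exp (2 * Real.pi * I / d) ^ (p : ℕ) := by
  ext p q
  simp [fourierV, vandermonde_apply, pow_mul, div_eq_inv_mul]

theorem isUnit_det_fourierV (d : ℕ) [NeZero d] : IsUnit (fourierV d).det := by
  have hω := isPrimitiveRoot_exp d (NeZero.ne d)
  rw [fourierV_eq_smul_vandermonde, det_smul, isUnit_iff_ne_zero]
  refine mul_ne_zero (pow_ne_zero _ (inv_ne_zero (ofReal_sqrt_natCast_ne_zero d))) ?_
  exact det_vandermonde_ne_zero_iff.2 fun p q h => Fin.ext (hω.pow_inj p.2 q.2 h)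

theorem sum_fourierV_apply (d : ℕ) [NeZero d] (q : Fin d) :
    ∑ p, fourierV d p q = (Pi.single 0 (Real.sqrt d : ℂ) : Fin d → ℂ) q := by
  have hω := isPrimitiveRoot_exp d (NeZero.ne d)
  simp only [fourierV, of_apply, ← Finset.sum_div, pow_mul']
  rw [Fin.sum_univ_eq_sum_range (fun p => (exp (2 * Real.pi * I / d) ^ (q : ℕ)) ^ p)]
  rcases eq_or_ne q 0 with rfl | hq
  · simp only [Fin.val_zero, pow_zero, one_pow, Finset.sum_const, Finset.card_range,
      nsmul_eq_mul, mul_one, Pi.single_eq_same]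
    rw [div_eq_iff (ofReal_sqrt_natCast_ne_zero d), ofReal_sqrt_natCast_mul_self]
  · rw [geom_sum_eq_zero_of_pow_eq_one, Pi.single_eq_of_ne hq, zero_div]
    · rw [← pow_mul', pow_mul, hω.pow_eq_one, one_pow]
    · exact hω.pow_ne_one_of_pos_of_lt (Fin.val_ne_zero_iff.2 hq) q.2

theorem const_mul_fourierV (d : ℕ) [NeZero d] (c : ℂ) :
    of (fun _ _ => c) * fourierV d = fourierV d * diagonal (Pi.single 0 (d * c)) := by
  ext p q
  rw [mul_apply, mul_diagonal]
  simp only [of_apply, ← Finset.mul_sum, sum_fourierV_apply]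
  rcases eq_or_ne q 0 with rfl | hq
  · have hsqrt := ofReal_sqrt_natCast_ne_zero d
    simp only [fourierV, of_apply, Fin.val_zero, mul_zero, pow_zero, Pi.single_eq_same]
    rw [← ofReal_sqrt_natCast_mul_self]
    field_simp
  · simp [Pi.single_eq_of_ne hq]

theorem fourierV_mul_diagonal_single_mul_inv (d : ℕ) [NeZero d] (c : ℂ) :
    fourierV d * diagonal (Pi.single 0 (d * c)) * (fourierV d)⁻¹ = of fun _ _ => c := by
  rw [← const_mul_fourierV, mul_nonsing_inv_cancel_right _ _ (isUnit_det_fourierV d)]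

theorem diagonal_single_mem_diagLie {d : ℕ} (t : Fin d) (r : ℝ) :
    diagonal (Pi.single t ((r : ℂ) * I)) ∈ diagLie d := by
  refine ⟨Pi.single t r, congrArg diagonal (funext fun p => ?_)⟩
  rcases eq_or_ne p t with rfl | hp
  · simp [mul_comm]
  · simp [hp]

theorem const_I_mem_diagLieConj (d : ℕ) [NeZero d] : of (fun _ _ => I) ∈ diagLieConj d :=
  ⟨_, by simpa using diagonal_single_mem_diagLie 0 d,
    (fourierV_mul_diagonal_single_mul_inv d I).symm⟩

theorem sigmaX_eq_lie_lie {d : ℕ} {j k : Fin d} (hjk : j ≠ k) :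
    sigmaX j k = ⁅diagonal (Pi.single j I), ⁅diagonal (Pi.single k I), of fun _ _ => I⁆⁆ := by
  rw [lie_diagonal_single_lie_diagonal_single hjk]
  simp [sigmaX, smul_single]

theorem sigmaY_eq_neg_lie {d : ℕ} {j k : Fin d} (hjk : j ≠ k) :
    sigmaY j k = -⁅diagonal (Pi.single j I), sigmaX j k⁆ := by
  rw [sigmaX, smul_add, smul_single, smul_single, lie_diagonal_single_single_add_single hjk]
  simp only [sigmaY, smul_sub, smul_single, smul_eq_mul, mul_one, I_mul_I, ← single_neg]
  abel

/-- For all 0 ≤ j < k ≤ d−1, both σ_x^{(jk)} and σ_y^{(jk)} belong to the real Lie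
    subalgebra 𝔪 generated by 𝔥 ∪ 𝔥'. -/
theorem sigmaX_sigmaY_mem_lieSpan (d : ℕ) [NeZero d] (j k : Fin d) (hjk : j < k) :
    sigmaX j k ∈
      LieSubalgebra.lieSpan ℝ (Matrix (Fin d) (Fin d) ℂ) (diagLie d ∪ diagLieConj d) ∧
    sigmaY j k ∈
      LieSubalgebra.lieSpan ℝ (Matrix (Fin d) (Fin d) ℂ) (diagLie d ∪ diagLieConj d) := by
  set 𝔪 := LieSubalgebra.lieSpan ℝ (Matrix (Fin d) (Fin d) ℂ) (diagLie d ∪ diagLieConj d)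
  have hdiag (t : Fin d) : diagonal (Pi.single t I) ∈ 𝔪 :=
    LieSubalgebra.subset_lieSpan (Or.inl (by simpa using diagonal_single_mem_diagLie t 1))
  have hconst : of (fun _ _ => I) ∈ 𝔪 :=
    LieSubalgebra.subset_lieSpan (Or.inr (const_I_mem_diagLieConj d))
  have hX : sigmaX j k ∈ 𝔪 := by
    rw [sigmaX_eq_lie_lie hjk.ne]
    exact 𝔪.lie_mem (hdiag j) (𝔪.lie_mem (hdiag k) hconst)
  refine ⟨hX, ?_⟩
  rw [sigmaY_eq_neg_lie hjk.ne]
  exact neg_mem (𝔪.lie_mem (hdiag j) hX)
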